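/- arXiv:2404.08922 — 8 statements merged into one kernel-verified Lean document; each statement's English description precedes it below -/
import Mathlib

section
/- Let t be a rational number with t ≠ 2, and let x, y ∈ ℂ satisfy x⁵ + y⁵ + 1 = 0 and x² + y² + 1 + t(xy + x + y) = 0. If x² + x + 1 ≠ 0 (i.e. x is not a primitive cube root of unity, so that the point [x,y,1] is distinct from P = [ζ₃, ζ₃², 1] and its conjugate), then f_t(x) = 0 and y = a₀ + a₁x + a₂x² + a₃x³ + a₄x⁴ + a₅x⁵. -/
open Polynomial IntermediateField

noncomputable def u (t : ℚ) : ℚ := (3*t^2 - 2*t + 2) / (t^2 + t - 1)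

noncomputable def v (t : ℚ) : ℚ :=
  (t^5 - 5*t^4 + 10*t^3 - 20*t^2 + 15*t - 7) / ((t - 2) * (t^2 + t - 1)^2)

noncomputable def w (t : ℚ) : ℚ :=
  (-3*t^5 + 10*t^4 - 20*t^3 + 20*t^2 - 20*t + 6) / ((t - 2) * (t^2 + t - 1)^2)

/-- The polynomial `f_t = X⁶ + uX⁵ + vX⁴ + wX³ + vX² + uX + 1 ∈ ℚ[X]`. -/
noncomputable def f (t : ℚ) : Polynomial ℚ :=
  X^6 + C (u t) * X^5 + C (v t) * X^4 + C (w t) * X^3 + C (v t) * X^2 + C (u t) * X + 1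

noncomputable def s (t : ℚ) : ℚ := (t^4 - 3*t^3 - t^2 + 3*t + 1) * (t - 2)

noncomputable def a0 (t : ℚ) : ℚ := -((t^2 + 1) * (t^3 - t^2 + 2*t - 3)) / s t

noncomputable def a1 (t : ℚ) : ℚ :=
  -(3*t^7 - 9*t^6 + 16*t^5 - 15*t^4 + 10*t^3 - 11*t^2 + 8*t - 7) / ((t^2 + t - 1) * s t)

noncomputable def a2 (t : ℚ) : ℚ :=
  (2*t^8 - 14*t^7 + 52*t^6 - 99*t^5 + 100*t^4 - 54*t^3 + 38*t^2 - 44*t + 13) /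
    ((t^2 + t - 1) * (t - 2) * s t)

noncomputable def a3 (t : ℚ) : ℚ :=
  (t^8 + t^7 - 21*t^6 + 65*t^5 - 90*t^4 + 78*t^3 - 57*t^2 + 32*t - 15) /
    ((t^2 + t - 1) * (t - 2) * s t)

noncomputable def a4 (t : ℚ) : ℚ := -(2*t^5 - 6*t^4 + 13*t^3 - 14*t^2 + 7*t - 5) / s t

noncomputable def a5 (t : ℚ) : ℚ := -((t^2 + t - 1) * (t^3 - t^2 + 2*t - 3)) / s t

/-!
On the conic, `y² + b y + c = 0` with `b = t (x + 1)` and `c = x² + t x + 1`, so `y⁵` reduces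
to a polynomial of degree one in `y` and the quintic becomes `A + B y = 0` with `A, B ∈ ℚ(t)[x]`.
Eliminating `y` by taking the norm `A² - b A B + c B²` of `A + B y` leaves the resultant, which is
`-(x² + x + 1)²` times `f_t` with cleared denominators; the square is the double intersection at
`P` and its conjugate. Hence `f_t(x) = 0`, and `y = -A / B` can be reduced modulo `f_t`: a Bezout
identity shows that `B` is invertible modulo `f_t` unless `t - 2`, `t² + t - 1`, a quartic or an
octic in `t` vanishes. None of these has a rational root, since each is monic with constant term
`±1` and is nonzero at `±1`.
-/

section QuadraticReduction

variable {R : Type*} [CommRing R] {b c y : R}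

theorem pow_five_eq_of_sq_add_mul_add_eq_zero (h : y ^ 2 + b * y + c = 0) :
    y ^ 5 = (b ^ 4 - 3 * b ^ 2 * c + c ^ 2) * y + b * c * (b ^ 2 - 2 * c) := by
  linear_combination (y ^ 3 - b * y ^ 2 + (b ^ 2 - c) * y - b ^ 3 + 2 * b * c) * h

theorem sq_sub_mul_add_mul_sq_eq_zero_of_add_mul_eq_zero (h : y ^ 2 + b * y + c = 0) {A B : R}
    (hl : A + B * y = 0) : A ^ 2 - b * A * B + c * B ^ 2 = 0 := by
  linear_combination (A - b * B - B * y) * hl + B ^ 2 * h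

end QuadraticReduction

theorem Polynomial.aeval_ne_zero_of_monic_of_isUnit_coeff_zero {p : ℤ[X]} (hp : p.Monic)
    (h0 : IsUnit (p.coeff 0)) (h1 : p.eval 1 ≠ 0) (h2 : p.eval (-1) ≠ 0) (r : ℚ) :
    aeval r p ≠ 0 := by
  intro hr
  obtain ⟨n, rfl, hn⟩ := exists_integer_of_is_root_of_monic hp hr
  rw [aeval_algebraMap_apply_eq_algebraMap_eval,
    map_eq_zero_iff _ (algebraMap ℤ ℚ).injective_int] at hr
  rcases Int.isUnit_iff.mp (isUnit_of_dvd_unit hn h0) with rfl | rfl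
  exacts [h1 hr, h2 hr]

namespace FermatConic

section NonvanishingDenominators

variable {K : Type*} [Field K] [CharZero K]

theorem sq_add_sub_one_ne_zero (t : ℚ) : (t : K) ^ 2 + t - 1 ≠ 0 := by
  have h : t ^ 2 + t - 1 ≠ 0 := by
    convert (X ^ 2 + X - 1 : ℤ[X]).aeval_ne_zero_of_monic_of_isUnit_coeff_zero
      (by monicity!) (by simp) (by norm_num) (by norm_num) t using 1
    simp
  exact_mod_cast h

theorem quartic_ne_zero (t : ℚ) : (t : K) ^ 4 - 3 * t ^ 3 - t ^ 2 + 3 * t + 1 ≠ 0 := by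
  have h : t ^ 4 - 3 * t ^ 3 - t ^ 2 + 3 * t + 1 ≠ 0 := by
    convert (X ^ 4 - 3 * X ^ 3 - X ^ 2 + 3 * X + 1 :
      ℤ[X]).aeval_ne_zero_of_monic_of_isUnit_coeff_zero
      (by monicity!) (by simp) (by norm_num) (by norm_num) t using 1
    simp [map_ofNat]
  exact_mod_cast h

theorem octic_ne_zero (t : ℚ) :
    (t : K) ^ 8 - 6 * t ^ 7 + 17 * t ^ 6 - 28 * t ^ 5 + 30 * t ^ 4 - 22 * t ^ 3 + 12 * t ^ 2
      - 4 * t + 1 ≠ 0 := by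
  have h : t ^ 8 - 6 * t ^ 7 + 17 * t ^ 6 - 28 * t ^ 5 + 30 * t ^ 4 - 22 * t ^ 3 + 12 * t ^ 2
      - 4 * t + 1 ≠ 0 := by
    convert (X ^ 8 - 6 * X ^ 7 + 17 * X ^ 6 - 28 * X ^ 5 + 30 * X ^ 4 - 22 * X ^ 3 + 12 * X ^ 2
      - 4 * X + 1 : ℤ[X]).aeval_ne_zero_of_monic_of_isUnit_coeff_zero
      (by monicity!) (by simp) (by norm_num) (by norm_num) t using 1
    simp [map_ofNat]
  exact_mod_cast h

end NonvanishingDenominators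

section Identities

variable {R : Type*} [CommRing R] (t x : R)

def conicLin : R := t * (x + 1)

def conicConst : R := x ^ 2 + t * x + 1

def quinticLin : R :=
  conicLin t x ^ 4 - 3 * conicLin t x ^ 2 * conicConst t x + conicConst t x ^ 2

def quinticConst : R :=
  x ^ 5 + 1 + conicLin t x * conicConst t x * (conicLin t x ^ 2 - 2 * conicConst t x)

def fCleared : R :=
  (t - 2) * (t ^ 2 + t - 1) ^ 2 * (x ^ 6 + 1)
    + (t - 2) * (t ^ 2 + t - 1) * (3 * t ^ 2 - 2 * t + 2) * (x ^ 5 + x)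
    + (t ^ 5 - 5 * t ^ 4 + 10 * t ^ 3 - 20 * t ^ 2 + 15 * t - 7) * (x ^ 4 + x ^ 2)
    + (-3 * t ^ 5 + 10 * t ^ 4 - 20 * t ^ 3 + 20 * t ^ 2 - 20 * t + 6) * x ^ 3

def yCleared : R :=
  -(t ^ 2 + t - 1) * (t - 2) * (t ^ 2 + 1) * (t ^ 3 - t ^ 2 + 2 * t - 3)
    - (t - 2) * (3 * t ^ 7 - 9 * t ^ 6 + 16 * t ^ 5 - 15 * t ^ 4 + 10 * t ^ 3 - 11 * t ^ 2
      + 8 * t - 7) * x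
    + (2 * t ^ 8 - 14 * t ^ 7 + 52 * t ^ 6 - 99 * t ^ 5 + 100 * t ^ 4 - 54 * t ^ 3 + 38 * t ^ 2
      - 44 * t + 13) * x ^ 2
    + (t ^ 8 + t ^ 7 - 21 * t ^ 6 + 65 * t ^ 5 - 90 * t ^ 4 + 78 * t ^ 3 - 57 * t ^ 2 + 32 * t
      - 15) * x ^ 3
    - (t - 2) * (t ^ 2 + t - 1) * (2 * t ^ 5 - 6 * t ^ 4 + 13 * t ^ 3 - 14 * t ^ 2 + 7 * t - 5)
      * x ^ 4
    - (t - 2) * (t ^ 2 + t - 1) ^ 2 * (t ^ 3 - t ^ 2 + 2 * t - 3) * x ^ 5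

variable {t x}

theorem sq_add_conicLin_mul_add_conicConst_eq_zero {y : R}
    (hC : x ^ 2 + y ^ 2 + 1 + t * (x * y + x + y) = 0) :
    y ^ 2 + conicLin t x * y + conicConst t x = 0 := by
  unfold conicLin conicConst
  linear_combination hC

theorem quinticConst_add_quinticLin_mul_eq_zero {y : R} (hF : x ^ 5 + y ^ 5 + 1 = 0)
    (hC : x ^ 2 + y ^ 2 + 1 + t * (x * y + x + y) = 0) :
    quinticConst t x + quinticLin t x * y = 0 := by
  unfold quinticConst quinticLin
  linear_combination
    hF - pow_five_eq_of_sq_add_mul_add_eq_zero (sq_add_conicLin_mul_add_conicConst_eq_zero hC)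

variable (t x) in
theorem quintic_norm_eq :
    quinticConst t x ^ 2 - conicLin t x * quinticConst t x * quinticLin t x
      + conicConst t x * quinticLin t x ^ 2 = -(x ^ 2 + x + 1) ^ 2 * fCleared t x := by
  unfold quinticConst quinticLin conicLin conicConst fCleared
  ring

theorem fCleared_eq_zero [IsDomain R] {y : R} (hF : x ^ 5 + y ^ 5 + 1 = 0)
    (hC : x ^ 2 + y ^ 2 + 1 + t * (x * y + x + y) = 0) (hx : x ^ 2 + x + 1 ≠ 0) :
    fCleared t x = 0 := by
  have hnorm := sq_sub_mul_add_mul_sq_eq_zero_of_add_mul_eq_zero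
    (sq_add_conicLin_mul_add_conicConst_eq_zero hC) (quinticConst_add_quinticLin_mul_eq_zero hF hC)
  rw [quintic_norm_eq, neg_mul, neg_eq_zero] at hnorm
  exact (mul_eq_zero.mp hnorm).resolve_left (pow_ne_zero 2 hx)

set_option maxHeartbeats 1000000 in
theorem quinticLin_ne_zero_of_fCleared_eq_zero [IsDomain R] (h2 : t - 2 ≠ 0)
    (hq2 : t ^ 2 + t - 1 ≠ 0) (hq4 : t ^ 4 - 3 * t ^ 3 - t ^ 2 + 3 * t + 1 ≠ 0)
    (hq8 : t ^ 8 - 6 * t ^ 7 + 17 * t ^ 6 - 28 * t ^ 5 + 30 * t ^ 4 - 22 * t ^ 3 + 12 * t ^ 2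
      - 4 * t + 1 ≠ 0) (hN : fCleared t x = 0) : quinticLin t x ≠ 0 := by
  intro hB
  -- the cofactors come from the extended Euclidean algorithm in `ℚ(t)[x]`
  have bezout :
      ((6 - 17 * t + 23 * t ^ 2 + 62 * t ^ 3 - 375 * t ^ 4 + 436 * t ^ 5 - 37 * t ^ 6 + 1068 * t ^ 7
         - 4028 * t ^ 8 + 4225 * t ^ 9 + 2197 * t ^ 10 - 10069 * t ^ 11 + 10746 * t ^ 12
         - 4506 * t ^ 13 - 1050 * t ^ 14 + 2198 * t ^ 15 - 1126 * t ^ 16 + 279 * t ^ 17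
         - 29 * t ^ 18)
       + (-16 + 48 * t + 18 * t ^ 2 - 289 * t ^ 3 + 665 * t ^ 4 - 471 * t ^ 5 - 7 * t ^ 6
         - 2157 * t ^ 7 + 8176 * t ^ 8 - 11415 * t ^ 9 + 3858 * t ^ 10 + 11471 * t ^ 11
         - 23369 * t ^ 12 + 24797 * t ^ 13 - 17615 * t ^ 14 + 8597 * t ^ 15 - 2771 * t ^ 16
         + 534 * t ^ 17 - 47 * t ^ 18) * x
       + (21 - 58 * t - 69 * t ^ 2 + 392 * t ^ 3 - 360 * t ^ 4 - 309 * t ^ 5 - 28 * t ^ 6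
         + 5691 * t ^ 7 - 16463 * t ^ 8 + 20410 * t ^ 9 - 5438 * t ^ 10 - 22816 * t ^ 11
         + 43842 * t ^ 12 - 43906 * t ^ 13 + 28635 * t ^ 14 - 12597 * t ^ 15 + 3641 * t ^ 16
         - 632 * t ^ 17 + 51 * t ^ 18) * x ^ 2
       + (-28 + 44 * t + 132 * t ^ 2 - 331 * t ^ 3 + 105 * t ^ 4 + 437 * t ^ 5 + 1304 * t ^ 6
         - 8748 * t ^ 7 + 17559 * t ^ 8 - 14380 * t ^ 9 - 7066 * t ^ 10 + 32763 * t ^ 11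
         - 42076 * t ^ 12 + 31633 * t ^ 13 - 15180 * t ^ 14 + 4521 * t ^ 15 - 713 * t ^ 16
         + 21 * t ^ 17 + 7 * t ^ 18) * x ^ 3
       + (18 - 37 * t - 90 * t ^ 2 + 212 * t ^ 3 + 90 * t ^ 4 - 77 * t ^ 5 - 2362 * t ^ 6
         + 7785 * t ^ 7 - 10313 * t ^ 8 + 1235 * t ^ 9 + 16601 * t ^ 10 - 27079 * t ^ 11
         + 20345 * t ^ 12 - 5246 * t ^ 13 - 4015 * t ^ 14 + 4529 * t ^ 15 - 2006 * t ^ 16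
         + 455 * t ^ 17 - 44 * t ^ 18) * x ^ 4
       + (-8 + 20 * t + 44 * t ^ 2 - 126 * t ^ 3 - 10 * t ^ 4 - 208 * t ^ 5 + 1555 * t ^ 6
         - 2476 * t ^ 7 + 179 * t ^ 8 + 4910 * t ^ 9 - 7536 * t ^ 10 + 3830 * t ^ 11 + 1943 * t ^ 12
         - 3522 * t ^ 13 + 1485 * t ^ 14 + 196 * t ^ 15 - 400 * t ^ 16 + 142 * t ^ 17
         - 18 * t ^ 18) * x ^ 5) * quinticLin t x =
        ((t - 2) * (t ^ 2 + t - 1) * (t ^ 4 - 3 * t ^ 3 - t ^ 2 + 3 * t + 1)) ^ 2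
          * (t ^ 8 - 6 * t ^ 7 + 17 * t ^ 6 - 28 * t ^ 5 + 30 * t ^ 4 - 22 * t ^ 3 + 12 * t ^ 2
            - 4 * t + 1)
        + ((-1 + 4 * t - 12 * t ^ 2 - 24 * t ^ 3 + 114 * t ^ 4 - 46 * t ^ 5 + 138 * t ^ 6
             - 638 * t ^ 7 + 239 * t ^ 8 + 1946 * t ^ 9 - 3597 * t ^ 10 + 1794 * t ^ 11
             + 2082 * t ^ 12 - 4026 * t ^ 13 + 3036 * t ^ 14 - 1268 * t ^ 15 + 293 * t ^ 16
             - 30 * t ^ 17)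
           + (6 - 2 * t - 52 * t ^ 2 + 41 * t ^ 3 + 60 * t ^ 4 - 73 * t ^ 5 + 364 * t ^ 6
             - 530 * t ^ 7 - 1176 * t ^ 8 + 4640 * t ^ 9 - 5954 * t ^ 10 + 1265 * t ^ 11
             + 6524 * t ^ 12 - 9991 * t ^ 13 + 7290 * t ^ 14 - 3043 * t ^ 15 + 708 * t ^ 16
             - 73 * t ^ 17) * x
           + (-1 + 4 * t - 10 * t ^ 2 - 24 * t ^ 3 + 15 * t ^ 4 + 160 * t ^ 5 + 545 * t ^ 6
             - 2528 * t ^ 7 + 2789 * t ^ 8 + 1510 * t ^ 9 - 7463 * t ^ 10 + 8092 * t ^ 11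
             - 2072 * t ^ 12 - 3676 * t ^ 13 + 4335 * t ^ 14 - 2174 * t ^ 15 + 561 * t ^ 16
             - 62 * t ^ 17) * x ^ 2
           + (4 - 34 * t ^ 2 - 2 * t ^ 3 + 70 * t ^ 4 + 167 * t ^ 5 - 392 * t ^ 6 - 183 * t ^ 7
             + 1372 * t ^ 8 - 1620 * t ^ 9 - 250 * t ^ 10 + 2437 * t ^ 11 - 2314 * t ^ 12
             + 577 * t ^ 13 + 480 * t ^ 14 - 436 * t ^ 15 + 142 * t ^ 16 - 18 * t ^ 17) * x ^ 3)
          * fCleared t x := by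
    unfold quinticLin conicLin conicConst fCleared
    ring
  rw [hB, hN, mul_zero, mul_zero, add_zero, eq_comm] at bezout
  simp [h2, hq2, hq4, hq8] at bezout

theorem quinticLin_mul_yCleared_of_fCleared_eq_zero (hN : fCleared t x = 0) :
    quinticLin t x * yCleared t x = -((t ^ 2 + t - 1) * (t - 2) ^ 2
      * (t ^ 4 - 3 * t ^ 3 - t ^ 2 + 3 * t + 1)) * quinticConst t x := by
  unfold quinticLin quinticConst conicLin conicConst yCleared
  unfold fCleared at hN
  linear_combination
    ((-1 + 2 * t - 9 * t ^ 2 - 3 * t ^ 3 + 16 * t ^ 4 - 9 * t ^ 5 + 3 * t ^ 6 - t ^ 7)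
     + (5 - 20 * t ^ 2 - 8 * t ^ 3 + 36 * t ^ 4 - 22 * t ^ 5 + 9 * t ^ 6 - 3 * t ^ 7) * x
     + (1 + 4 * t - 25 * t ^ 2 + 12 * t ^ 3 + 11 * t ^ 4 - 10 * t ^ 5 + 7 * t ^ 6
       - 3 * t ^ 7) * x ^ 2
     + (3 - 2 * t - 8 * t ^ 2 + 5 * t ^ 3 + t ^ 5 + t ^ 6 - t ^ 7) * x ^ 3) * hN

theorem mul_eq_yCleared_of_fCleared_eq_zero [IsDomain R] {y : R} (hB : quinticLin t x ≠ 0)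
    (hl : quinticConst t x + quinticLin t x * y = 0) (hN : fCleared t x = 0) :
    (t ^ 2 + t - 1) * (t - 2) ^ 2 * (t ^ 4 - 3 * t ^ 3 - t ^ 2 + 3 * t + 1) * y
      = yCleared t x := by
  apply mul_left_cancel₀ hB
  linear_combination
    (t ^ 2 + t - 1) * (t - 2) ^ 2 * (t ^ 4 - 3 * t ^ 3 - t ^ 2 + 3 * t + 1) * hl
      - quinticLin_mul_yCleared_of_fCleared_eq_zero hN

end Identities

section RationalParameter

variable {K : Type*} [Field K] [CharZero K] {t : ℚ}

theorem mul_aeval_f_eq_fCleared (h2 : t ≠ 2) (x : K) :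
    ((t : K) - 2) * ((t : K) ^ 2 + t - 1) ^ 2 * aeval x (f t) = fCleared (t : K) x := by
  simp only [f, u, v, w, fCleared, map_add, map_mul, map_pow, map_one, aeval_X, aeval_C,
    eq_ratCast]
  push_cast
  have hd : (t : K) - 2 ≠ 0 := by exact_mod_cast sub_ne_zero.mpr h2
  have hq := sq_add_sub_one_ne_zero (K := K) t
  set d := (t : K) - 2
  set q := (t : K) ^ 2 + t - 1
  field_simp
  ring

theorem mul_sum_a_eq_yCleared (h2 : t ≠ 2) (x : K) :
    ((t : K) ^ 2 + t - 1) * ((t : K) - 2) ^ 2 * ((t : K) ^ 4 - 3 * t ^ 3 - t ^ 2 + 3 * t + 1)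
      * (a0 t + a1 t * x + a2 t * x ^ 2 + a3 t * x ^ 3 + a4 t * x ^ 4 + a5 t * x ^ 5)
      = yCleared (t : K) x := by
  simp only [a0, a1, a2, a3, a4, a5, s, yCleared]
  push_cast
  have hd : (t : K) - 2 ≠ 0 := by exact_mod_cast sub_ne_zero.mpr h2
  have hq := sq_add_sub_one_ne_zero (K := K) t
  have hq4 := quartic_ne_zero (K := K) t
  set d := (t : K) - 2
  set q := (t : K) ^ 2 + t - 1
  set q4 := (t : K) ^ 4 - 3 * t ^ 3 - t ^ 2 + 3 * t + 1
  field_simp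
  ring

theorem aeval_f_eq_zero (h2 : t ≠ 2) {x : K} (hN : fCleared (t : K) x = 0) :
    aeval x (f t) = 0 := by
  have hd : (t : K) - 2 ≠ 0 := by exact_mod_cast sub_ne_zero.mpr h2
  have h := mul_aeval_f_eq_fCleared h2 x
  rw [hN] at h
  exact (mul_eq_zero.mp h).resolve_left (mul_ne_zero hd (pow_ne_zero 2 (sq_add_sub_one_ne_zero t)))

theorem eq_sum_a (h2 : t ≠ 2) {x y : K}
    (hl : quinticConst (t : K) x + quinticLin (t : K) x * y = 0) (hN : fCleared (t : K) x = 0) :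
    y = a0 t + a1 t * x + a2 t * x ^ 2 + a3 t * x ^ 3 + a4 t * x ^ 4 + a5 t * x ^ 5 := by
  have hd : (t : K) - 2 ≠ 0 := by exact_mod_cast sub_ne_zero.mpr h2
  have hq := sq_add_sub_one_ne_zero (K := K) t
  have hq4 := quartic_ne_zero (K := K) t
  have hB := quinticLin_ne_zero_of_fCleared_eq_zero hd hq hq4 (octic_ne_zero t) hN
  apply mul_left_cancel₀ (mul_ne_zero (mul_ne_zero hq (pow_ne_zero 2 hd)) hq4)
  rw [mul_sum_a_eq_yCleared h2 x]
  exact mul_eq_yCleared_of_fCleared_eq_zero hB hl hN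

end RationalParameter

end FermatConic

/-- If `t ≠ 2` is rational and `x, y ∈ ℂ` satisfy `x⁵ + y⁵ + 1 = 0` and
`x² + y² + 1 + t(xy + x + y) = 0`, and if `x² + x + 1 ≠ 0` (so that the point `[x,y,1]`
is distinct from `P = [ζ₃,ζ₃²,1]` and its conjugate), then `f t (x) = 0` and
`y = a₀ + a₁x + a₂x² + a₃x³ + a₄x⁴ + a₅x⁵`. -/
theorem intersection_point_root_and_formula (t : ℚ) (h2 : t ≠ 2) (x y : ℂ)
    (hF : x^5 + y^5 + 1 = 0)
    (hC : x^2 + y^2 + 1 + (t : ℂ) * (x*y + x + y) = 0)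
    (hx : x^2 + x + 1 ≠ 0) :
    Polynomial.aeval x (f t) = 0 ∧
      y = (a0 t : ℂ) + (a1 t : ℂ) * x + (a2 t : ℂ) * x^2 + (a3 t : ℂ) * x^3
        + (a4 t : ℂ) * x^4 + (a5 t : ℂ) * x^5 := by
  have hN := FermatConic.fCleared_eq_zero hF hC hx
  exact ⟨FermatConic.aeval_f_eq_zero h2 hN,
    FermatConic.eq_sum_a h2 (FermatConic.quinticConst_add_quinticLin_mul_eq_zero hF hC) hN⟩
end

section
/- Let a, b, c, d, e, f be rational numbers, let ζ ∈ ℂ be a primitive cube root of unity, and consider F(x,y,z) = ax² + by² + cz² + dxy + exz + fyz. If the three partial derivatives F_x, F_y, F_z all vanish at the point (ζ, ζ², 1), then a = b = c, d = e = f and d = 2a; consequently F = a·(x+y+z)². In particular, if a plane conic defined over ℚ is irreducible over ℚ and passes through P = [ζ, ζ², 1], then P is a smooth point of the conic. -/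
/-- The quadratic form `F(x,y,z) = ax² + by² + cz² + dxy + exz + fyz`
as a polynomial over `ℚ` in three variables. -/
noncomputable def conicPoly (a b c d e f : ℚ) : MvPolynomial (Fin 3) ℚ :=
  MvPolynomial.C a * MvPolynomial.X 0 ^ 2 + MvPolynomial.C b * MvPolynomial.X 1 ^ 2 +
    MvPolynomial.C c * MvPolynomial.X 2 ^ 2 +
    MvPolynomial.C d * (MvPolynomial.X 0 * MvPolynomial.X 1) +
    MvPolynomial.C e * (MvPolynomial.X 0 * MvPolynomial.X 2) +
    MvPolynomial.C f * (MvPolynomial.X 1 * MvPolynomial.X 2)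

/-!
Since `ζ² = -ζ - 1` and `ζ ∉ ℚ`, each partial derivative of `F` at `P` reduces to `qζ + r` with
`q, r ∈ ℚ`, hence `q = r = 0`. The resulting six linear equations force `F = a(x+y+z)²`, and a
constant multiple of the square of a linear form is never irreducible.
-/

namespace IsPrimitiveRoot

variable {K : Type*} [Field K] [CharZero K] {ζ : K} {n : ℕ}

theorem ratCast_ne (hζ : IsPrimitiveRoot ζ n) (hn : 3 ≤ n) (s : ℚ) : (s : K) ≠ ζ := by
  rintro rfl
  have hs : IsPrimitiveRoot s n := hζ.of_map_of_injective (Rat.castHom K).injective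
  rcases (pow_eq_one_iff_of_ne_zero (by omega)).mp hs.pow_eq_one with rfl | ⟨rfl, -⟩
  · have := one_left_iff.mp hs
    omega
  · have := (neg_one 0 (by norm_num)).unique hs
    omega

theorem ratCast_mul_add_eq_zero_iff (hζ : IsPrimitiveRoot ζ n) (hn : 3 ≤ n) {q r : ℚ} :
    (q : K) * ζ + r = 0 ↔ q = 0 ∧ r = 0 := by
  refine ⟨fun h => ?_, fun ⟨hq, hr⟩ => by simp [hq, hr]⟩
  obtain rfl | hq := eq_or_ne q 0
  · exact ⟨rfl, by simpa using h⟩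
  refine absurd ?_ (hζ.ratCast_ne hn (-r / q))
  have : (q : K) ≠ 0 := by exact_mod_cast hq
  push_cast
  field_simp
  linear_combination -h

end IsPrimitiveRoot

theorem IsPrimitiveRoot.sq_add_self_add_one {R : Type*} [CommRing R] [IsDomain R] {ζ : R}
    (hζ : IsPrimitiveRoot ζ 3) : ζ ^ 2 + ζ + 1 = 0 := by
  have h := hζ.geom_sum_eq_zero (by norm_num)
  simp only [Finset.sum_range_succ, Finset.sum_range_zero] at h
  linear_combination h

open MvPolynomial

theorem conic_coeffs_of_partials_vanish {K : Type*} [Field K] [CharZero K] {ζ : K}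
    (hζ : IsPrimitiveRoot ζ 3) {a b c d e f : ℚ}
    (h₁ : 2 * (a : K) * ζ + d * ζ ^ 2 + e = 0) (h₂ : 2 * (b : K) * ζ ^ 2 + d * ζ + f = 0)
    (h₃ : 2 * (c : K) + e * ζ + f * ζ ^ 2 = 0) :
    b = a ∧ c = a ∧ d = 2 * a ∧ e = 2 * a ∧ f = 2 * a := by
  have hζ₂ := hζ.sq_add_self_add_one
  obtain ⟨hx₁, hx₀⟩ := (hζ.ratCast_mul_add_eq_zero_iff le_rfl (q := 2 * a - d) (r := e - d)).mp
    (by push_cast; linear_combination h₁ - d * hζ₂)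
  obtain ⟨hy₁, hy₀⟩ := (hζ.ratCast_mul_add_eq_zero_iff le_rfl (q := d - 2 * b) (r := f - 2 * b)).mp
    (by push_cast; linear_combination h₂ - 2 * b * hζ₂)
  obtain ⟨hz₁, hz₀⟩ := (hζ.ratCast_mul_add_eq_zero_iff le_rfl (q := e - f) (r := 2 * c - f)).mp
    (by push_cast; linear_combination h₃ - f * hζ₂)
  refine ⟨?_, ?_, ?_, ?_, ?_⟩ <;> linarith

theorem conicPoly_double_line (a : ℚ) :
    conicPoly a a a (2 * a) (2 * a) (2 * a) = C a * (X 0 + X 1 + X 2) * (X 0 + X 1 + X 2) := by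
  simp only [conicPoly, C_mul, map_ofNat]
  ring

theorem not_irreducible_conicPoly_double_line (a : ℚ) :
    ¬ Irreducible (conicPoly a a a (2 * a) (2 * a) (2 * a)) := by
  have hline : ¬ IsUnit (X 0 + X 1 + X 2 : MvPolynomial (Fin 3) ℚ) := fun hu => by
    simpa using hu.map (eval ![1, -1, 0])
  rw [conicPoly_double_line]
  intro hirr
  rcases hirr.isUnit_or_isUnit rfl with hu | hu
  · exact hline (isUnit_of_mul_isUnit_right hu)
  · exact hline hu

/-- Let `F(x,y,z) = ax² + by² + cz² + dxy + exz + fyz` with `a,…,f ∈ ℚ` and let `ζ` be a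
primitive cube root of unity. If the three partial derivatives
`F_x = 2ax + dy + ez`, `F_y = 2by + dx + fz`, `F_z = 2cz + ex + fy` all vanish at
`P = (ζ, ζ², 1)`, then `a = b = c`, `d = e = f` and `d = 2a`; consequently
`F = a(x+y+z)²`. In particular, if the conic `F = 0` is irreducible over `ℚ` and passes
through `P`, then `P` is a smooth point of it (the partials do not all vanish at `P`). -/
theorem singular_at_P_implies_double_line (a b c d e f : ℚ) (ζ : ℂ)
    (hζ : IsPrimitiveRoot ζ 3) :
    ((2*(a:ℂ)*ζ + (d:ℂ)*ζ^2 + (e:ℂ) = 0 ∧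
      2*(b:ℂ)*ζ^2 + (d:ℂ)*ζ + (f:ℂ) = 0 ∧
      2*(c:ℂ) + (e:ℂ)*ζ + (f:ℂ)*ζ^2 = 0) →
      ((a = b ∧ b = c ∧ d = e ∧ e = f ∧ d = 2*a) ∧
        ∀ x y z : ℂ, (a:ℂ)*x^2 + (b:ℂ)*y^2 + (c:ℂ)*z^2 + (d:ℂ)*(x*y) + (e:ℂ)*(x*z)
          + (f:ℂ)*(y*z) = (a:ℂ)*(x+y+z)^2)) ∧
    (Irreducible (conicPoly a b c d e f) →
      MvPolynomial.aeval ![ζ, ζ^2, 1] (conicPoly a b c d e f) = 0 →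
      ¬(2*(a:ℂ)*ζ + (d:ℂ)*ζ^2 + (e:ℂ) = 0 ∧
        2*(b:ℂ)*ζ^2 + (d:ℂ)*ζ + (f:ℂ) = 0 ∧
        2*(c:ℂ) + (e:ℂ)*ζ + (f:ℂ)*ζ^2 = 0)) := by
  refine ⟨?_, fun hirr _ => ?_⟩
  · rintro ⟨h₁, h₂, h₃⟩
    obtain ⟨rfl, rfl, rfl, rfl, rfl⟩ := conic_coeffs_of_partials_vanish hζ h₁ h₂ h₃
    exact ⟨⟨rfl, rfl, rfl, rfl, rfl⟩, fun x y z => by push_cast; ring⟩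
  · rintro ⟨h₁, h₂, h₃⟩
    obtain ⟨rfl, rfl, rfl, rfl, rfl⟩ := conic_coeffs_of_partials_vanish hζ h₁ h₂ h₃
    exact not_irreducible_conicPoly_double_line _ hirr
end

section
/- Let a, b, c, d, e, f be rational numbers, let ζ ∈ ℂ be a primitive cube root of unity, set F(x,y,z) = ax² + by² + cz² + dxy + exz + fyz ∈ ℚ[x,y,z] and P = (ζ, ζ², 1). The following are equivalent: (i) F is irreducible in ℚ[x,y,z], F(P) = 0, and the gradient (F_x(P), F_y(P), F_z(P)) is a nonzero scalar multiple of (ζ, ζ², 1) (i.e. P is a smooth point of the conic F = 0 whose tangent line there is the tangent line ζx + ζ²y + z = 0 of the Fermat quintic x⁵+y⁵+z⁵=0 at P); (ii) a = b = c, d = e = f, and d ≠ 2a. -/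
/-!
Since `ζ² + ζ + 1 = 0`, the numbers `1, ζ` are linearly independent over `ℚ`, so incidence and
tangency at `P = (ζ, ζ², 1)` split into rational linear equations; they force `a = b = c`,
`d = e = f`, and then the gradient at `P` is `(2a - d) P`.

Conversely, on the plane `x + y + z = 0` the form `F = a(x² + y² + z²) + d(xy + xz + yz)`
equals `(a - d/2)(x² + y² + z²)`, which vanishes only at `0` when `d ≠ 2a`. A factorization
`F = G H` into non-units has affine factors. Pick `v ≠ 0` in that plane on which the linear part
of `G` vanishes: `G` is constant on the line `ℚ v`, so `F(v) + F(-v) = 2 G(0) H(0) = 2 F(0) = 0`,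
whereas `F(v) + F(-v) = 2(a - d/2)|v|² ≠ 0`.
-/

namespace MvPolynomial

variable {σ R K : Type*}

theorem eq_C_add_sum_C_mul_X_of_totalDegree_le_one [Fintype σ] [CommSemiring R]
    {p : MvPolynomial σ R} (hp : p.totalDegree ≤ 1) :
    p = C (p.coeff 0) + ∑ i, C (p.coeff (Finsupp.single i 1)) * X i := by
  classical
  ext m
  simp only [coeff_add, coeff_C, coeff_sum, coeff_C_mul, coeff_X, mul_ite, mul_one, mul_zero]
  obtain hm | hm | hm : m.degree = 0 ∨ m.degree = 1 ∨ 1 < m.degree := by omega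
  · obtain rfl := (Finsupp.degree_eq_zero_iff m).mp hm
    simp
  · obtain ⟨i, rfl⟩ : m ∈ Set.range fun i : σ ↦ Finsupp.single i 1 :=
      Finsupp.range_single_one ▸ hm
    simp [Finsupp.single_left_inj, (Finsupp.single_ne_zero.mpr one_ne_zero).symm]
  · rw [coeff_eq_zero_of_totalDegree_lt (hp.trans_lt hm)]
    have h0 : (0 : σ →₀ ℕ) ≠ m := by rintro rfl; simp at hm
    have h1 : ∀ i, Finsupp.single i 1 ≠ m := by rintro i rfl; simp at hm
    simp [h0, h1]

theorem eval_eq_of_totalDegree_le_one [Fintype σ] [CommSemiring R]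
    {p : MvPolynomial σ R} (hp : p.totalDegree ≤ 1) (x : σ → R) :
    eval x p = p.coeff 0 + (fun i ↦ p.coeff (Finsupp.single i 1)) ⬝ᵥ x := by
  conv_lhs => rw [eq_C_add_sum_C_mul_X_of_totalDegree_le_one hp]
  simp [dotProduct]

theorem totalDegree_pos_of_not_isUnit [Field K] {p : MvPolynomial σ K} (hp0 : p ≠ 0)
    (hp : ¬IsUnit p) : 0 < p.totalDegree := by
  refine Nat.pos_of_ne_zero fun h ↦ hp ?_
  rw [totalDegree_eq_zero_iff_eq_C.mp h] at hp0 ⊢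
  exact isUnit_iff_ne_zero.mpr (by simpa using hp0) |>.map C

end MvPolynomial

open MvPolynomial

theorem exists_ne_zero_sum_eq_zero_dotProduct_eq_zero {K : Type*} [Field K] (g : Fin 3 → K) :
    ∃ v ≠ 0, ∑ i, v i = 0 ∧ g ⬝ᵥ v = 0 := by
  obtain ⟨v, hv, hMv⟩ := Matrix.exists_mulVec_eq_zero_iff.mpr
    (Matrix.det_eq_zero_of_row_eq_zero (A := Matrix.of ![1, g, 0]) 2 fun _ ↦ rfl)
  refine ⟨v, hv, ?_, ?_⟩
  · simpa [Matrix.mulVec, dotProduct] using congrFun hMv 0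
  · simpa [Matrix.mulVec] using congrFun hMv 1

theorem isHomogeneous_conicPoly (a b c d e f : ℚ) : (conicPoly a b c d e f).IsHomogeneous 2 := by
  have hX (i j : Fin 3) : (X i * X j : MvPolynomial (Fin 3) ℚ).IsHomogeneous 2 :=
    (isHomogeneous_X ℚ i).mul (isHomogeneous_X ℚ j)
  simp only [conicPoly, sq]
  exact ((((((hX 0 0).C_mul a).add ((hX 1 1).C_mul b)).add ((hX 2 2).C_mul c)).add
    ((hX 0 1).C_mul d)).add ((hX 0 2).C_mul e)).add ((hX 1 2).C_mul f)

theorem aeval_conicPoly {L : Type*} [Field L] [CharZero L] (a b c d e f : ℚ) (x : Fin 3 → L) :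
    aeval x (conicPoly a b c d e f) = a * x 0 ^ 2 + b * x 1 ^ 2 + c * x 2 ^ 2 +
      d * (x 0 * x 1) + e * (x 0 * x 2) + f * (x 1 * x 2) := by
  simp [conicPoly]

theorem eval_conicPoly_of_sum_eq_zero (a d : ℚ) {v : Fin 3 → ℚ} (hv : ∑ i, v i = 0) :
    eval v (conicPoly a a a d d d) = (a - d / 2) * (v ⬝ᵥ v) := by
  rw [Fin.sum_univ_three] at hv
  simp only [conicPoly, eval_add, eval_mul, eval_C, eval_pow, eval_X, dotProduct,
    Fin.sum_univ_three]
  linear_combination (d / 2 * (v 0 + v 1 + v 2)) * hv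

theorem irreducible_conicPoly {a d : ℚ} (hd : d ≠ 2 * a) :
    Irreducible (conicPoly a a a d d d) := by
  set F := conicPoly a a a d d d
  have hα : a - d / 2 ≠ 0 := fun h ↦ hd (by linarith)
  have hF0 : eval 0 F = 0 := by simp [F, conicPoly]
  refine ⟨fun hu ↦ (hu.map (eval 0)).ne_zero hF0, fun G H hGH ↦ ?_⟩
  by_contra! ⟨hG, hH⟩
  have hFne : F ≠ 0 := by
    intro h
    have := eval_conicPoly_of_sum_eq_zero a d (v := ![1, -1, 0]) (by simp [Fin.sum_univ_three])
    change eval _ F = _ at this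
    simp [h, dotProduct, Fin.sum_univ_three] at this
    exact hα (by linarith)
  have hG0 : G ≠ 0 := by rintro rfl; simp_all
  have hH0 : H ≠ 0 := by rintro rfl; simp_all
  have hdeg : G.totalDegree + H.totalDegree ≤ 2 := by
    rw [← totalDegree_mul_of_isDomain hG0 hH0, ← hGH]
    exact (isHomogeneous_conicPoly a a a d d d).totalDegree_le
  have hGpos := totalDegree_pos_of_not_isUnit hG0 hG
  have hHpos := totalDegree_pos_of_not_isUnit hH0 hH
  have hG1 : G.totalDegree ≤ 1 := by omega
  have hH1 : H.totalDegree ≤ 1 := by omega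
  obtain ⟨v, hv0, hvsum, hGv⟩ :=
    exists_ne_zero_sum_eq_zero_dotProduct_eq_zero fun i ↦ G.coeff (Finsupp.single i 1)
  -- `G` is constant on the line through `v`, so `F(v) + F(-v) = G(0) (H(v) + H(-v)) = 2 F(0)`.
  have hsym : eval v F + eval (-v) F = 0 := by
    rw [hGH] at hF0 ⊢
    simp only [eval_mul, eval_eq_of_totalDegree_le_one hG1, eval_eq_of_totalDegree_le_one hH1,
      dotProduct_neg, hGv, dotProduct_zero] at hF0 ⊢
    linear_combination 2 * hF0
  rw [eval_conicPoly_of_sum_eq_zero a d hvsum,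
    eval_conicPoly_of_sum_eq_zero a d (by simpa using hvsum), neg_dotProduct_neg] at hsym
  have hvv : (a - d / 2) * (v ⬝ᵥ v) = 0 := by linear_combination hsym / 2
  exact hv0 (dotProduct_self_eq_zero.mp ((mul_eq_zero_iff_left hα).mp hvv))

section CubeRoot

variable {L : Type*} [Field L] [CharZero L] {ζ : L}

-- `p² - pq + q²` is the norm of `p + qζ`, and it is positive unless `p = q = 0`.
theorem eq_zero_of_ratCast_add_ratCast_mul_eq_zero (hζ : ζ ^ 2 + ζ + 1 = 0) {p q : ℚ}
    (h : (p : L) + q * ζ = 0) : p = 0 ∧ q = 0 := by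
  have hnorm : ((p ^ 2 - p * q + q ^ 2 : ℚ) : L) = 0 := by
    push_cast
    linear_combination (q : L) ^ 2 * hζ - ((q : L) * ζ - p + q) * h
  have hq : q = 0 := by nlinarith [sq_nonneg (2 * p - q), sq_nonneg q, Rat.cast_eq_zero.mp hnorm]
  subst hq
  simpa using h

theorem conicPoly_coeffs_of_tangent (hζ : ζ ^ 2 + ζ + 1 = 0) {a b c d e f : ℚ}
    (hP : aeval ![ζ, ζ ^ 2, 1] (conicPoly a b c d e f) = 0) {lam : L} (hlam : lam ≠ 0)
    (h₀ : 2 * (a : L) * ζ + d * ζ ^ 2 + e = lam * ζ)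
    (h₁ : 2 * (b : L) * ζ ^ 2 + d * ζ + f = lam * ζ ^ 2)
    (h₂ : 2 * (c : L) + e * ζ + f * ζ ^ 2 = lam * 1) :
    a = b ∧ b = c ∧ d = e ∧ e = f ∧ d ≠ 2 * a := by
  have hcube : ζ ^ 3 = 1 := by linear_combination (ζ - 1) * hζ
  simp only [aeval_conicPoly, Matrix.cons_val_zero, Matrix.cons_val_one, Matrix.cons_val_two,
    Matrix.head_cons, Matrix.tail_cons] at hP
  -- reduce each relation to the form `p + q ζ = 0` using `ζ² = -1 - ζ` and `ζ³ = 1`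
  obtain ⟨hP₀, hP₁⟩ := eq_zero_of_ratCast_add_ratCast_mul_eq_zero hζ
    (p := c + d - a - f) (q := b + e - a - f) (by
      push_cast; linear_combination hP - (b * ζ + d) * hcube - (a + f) * hζ)
  obtain ⟨h₀₀, h₀₁⟩ := eq_zero_of_ratCast_add_ratCast_mul_eq_zero hζ
    (p := 2 * e - d - f) (q := 2 * a - d - 2 * c + e) (by
      push_cast; linear_combination h₀ - ζ * h₂ + f * hcube + (e - d) * hζ)
  obtain ⟨h₁₀, h₁₁⟩ := eq_zero_of_ratCast_add_ratCast_mul_eq_zero hζ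
    (p := f - 2 * b - e + 2 * c) (q := d - 2 * b - f + 2 * c) (by
      push_cast
      linear_combination h₁ - ζ ^ 2 * h₂ + (e + f * ζ) * hcube + (2 * c - 2 * b) * hζ)
  refine ⟨by linarith, by linarith, by linarith, by linarith, fun hda ↦ hlam ?_⟩
  rw [show c = a by linarith, show e = 2 * a by linarith, show f = 2 * a by linarith] at h₂
  push_cast at h₂
  linear_combination -h₂ + 2 * (a : L) * hζ

end CubeRoot

/-- Let `F(x,y,z) = ax² + by² + cz² + dxy + exz + fyz` with `a,…,f ∈ ℚ`, let `ζ ∈ ℂ` be a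
primitive cube root of unity and `P = (ζ, ζ², 1)`. The following are equivalent:
(i) `F` is irreducible in `ℚ[x,y,z]`, `F(P) = 0`, and the gradient
`(F_x(P), F_y(P), F_z(P))` is a nonzero scalar multiple of `(ζ, ζ², 1)` (i.e. `P` is a
smooth point of the conic `F = 0` whose tangent there is the tangent line
`ζx + ζ²y + z = 0` of the Fermat quintic at `P`);
(ii) `a = b = c`, `d = e = f` and `d ≠ 2a`. -/
theorem conic_tangent_at_P_iff (a b c d e f : ℚ) (ζ : ℂ)
    (hζ : IsPrimitiveRoot ζ 3) :
    (Irreducible (conicPoly a b c d e f) ∧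
      MvPolynomial.aeval ![ζ, ζ^2, 1] (conicPoly a b c d e f) = 0 ∧
      ∃ lam : ℂ, lam ≠ 0 ∧
        2*(a:ℂ)*ζ + (d:ℂ)*ζ^2 + (e:ℂ) = lam * ζ ∧
        2*(b:ℂ)*ζ^2 + (d:ℂ)*ζ + (f:ℂ) = lam * ζ^2 ∧
        2*(c:ℂ) + (e:ℂ)*ζ + (f:ℂ)*ζ^2 = lam * 1) ↔
    (a = b ∧ b = c ∧ d = e ∧ e = f ∧ d ≠ 2*a) := by
  have hζ' : ζ ^ 2 + ζ + 1 = 0 := by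
    have := hζ.geom_sum_eq_zero (by norm_num)
    simp only [Finset.sum_range_succ, Finset.sum_range_zero] at this
    linear_combination this
  constructor
  · rintro ⟨-, hP, lam, hlam, h₀, h₁, h₂⟩
    exact conicPoly_coeffs_of_tangent hζ' hP hlam h₀ h₁ h₂
  · rintro ⟨rfl, rfl, rfl, rfl, hd⟩
    have hcube : ζ ^ 3 = 1 := hζ.pow_eq_one
    have hlam : ((2 * a - d : ℚ) : ℂ) ≠ 0 := by exact_mod_cast sub_ne_zero.mpr hd.symm
    refine ⟨irreducible_conicPoly hd, ?_, _, hlam, ?_, ?_, ?_⟩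
    · simp only [aeval_conicPoly, Matrix.cons_val_zero, Matrix.cons_val_one, Matrix.cons_val_two,
        Matrix.head_cons, Matrix.tail_cons]
      linear_combination (a * ζ + d) * hcube + (a + d) * hζ'
    all_goals push_cast; linear_combination (d : ℂ) * hζ'
end

section
/- The polynomial 7x⁵ − 10x⁴ − 20x³ − 4 ∈ ℝ[x] has exactly one real root r, and this root satisfies 2.55 < r < 2.56 (numerically r ≈ 2.558). -/
/-!
Write `p x = 7x⁵ − 10x⁴ − 20x³ − 4`. Since `p' x = 5x²(7x + 6)(x − 2)`, `p` is strictly increasing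
on `[2, ∞)`, while on `(−∞, 2]` it is negative: its largest value there is the local maximum
`p(−6/7) = −100/2401`. So every real root lies in `(2, ∞)`, where `p` is injective, and a root
exists in `(2.55, 2.56)` because `p 2.55 < 0 < p 2.56`.
-/

open Set

def quintic (x : ℝ) : ℝ := 7*x^5 - 10*x^4 - 20*x^3 - 4

lemma continuous_quintic : Continuous quintic := by
  unfold quintic
  fun_prop

lemma hasDerivAt_quintic (x : ℝ) : HasDerivAt quintic (5*x^2*((7*x+6)*(x-2))) x := by
  have h := ((((hasDerivAt_pow 5 x).const_mul 7).fun_sub ((hasDerivAt_pow 4 x).const_mul 10)).fun_sub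
    ((hasDerivAt_pow 3 x).const_mul 20)).sub_const 4
  exact h.congr_deriv (by norm_num; ring)

lemma strictMonoOn_quintic : StrictMonoOn quintic (Ici 2) := by
  refine strictMonoOn_of_hasDerivWithinAt_pos (convex_Ici 2) continuous_quintic.continuousOn
    (fun x _ => (hasDerivAt_quintic x).hasDerivWithinAt) fun x hx => ?_
  rw [interior_Ici, mem_Ioi] at hx
  have hx₀ : 0 < x := by linarith
  have h₁ : 0 < 7*x+6 := by linarith
  have h₂ : 0 < x-2 := by linarith
  positivity

lemma quintic_neg_of_le_two {x : ℝ} (hx : x ≤ 2) : quintic x < 0 := by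
  unfold quintic
  rcases le_total x 0 with hneg | hpos
  · -- `(7x + 6)²` vanishes at the maximiser `−6/7`, where the margin is only `100/2401`
    have ht : 0 ≤ -x := neg_nonneg.2 hneg
    nlinarith [sq_nonneg (7*x+6), mul_nonneg (sq_nonneg (7*x+6)) ht,
      mul_nonneg (mul_nonneg (sq_nonneg (7*x+6)) ht) ht, sq_nonneg x]
  · nlinarith [pow_nonneg hpos 3, mul_nonneg (pow_nonneg hpos 3) (mul_nonneg hpos (sub_nonneg.2 hx))]

lemma two_lt_of_quintic_eq_zero {x : ℝ} (hx : quintic x = 0) : 2 < x :=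
  not_le.1 fun h => (quintic_neg_of_le_two h).ne hx

/-- The polynomial `7x⁵ − 10x⁴ − 20x³ − 4` has exactly one real root `r`, and
`2.55 < r < 2.56` (numerically `r ≈ 2.558`). -/
theorem unique_real_root :
    ∃ r : ℝ, (7*r^5 - 10*r^4 - 20*r^3 - 4 = 0) ∧ 2.55 < r ∧ r < 2.56 ∧
      ∀ x : ℝ, 7*x^5 - 10*x^4 - 20*x^3 - 4 = 0 → x = r := by
  obtain ⟨r, ⟨hr₁, hr₂⟩, hr⟩ : ∃ r ∈ Ioo (2.55 : ℝ) 2.56, quintic r = 0 :=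
    intermediate_value_Ioo (by norm_num) continuous_quintic.continuousOn
      ⟨by norm_num [quintic], by norm_num [quintic]⟩
  refine ⟨r, hr, hr₁, hr₂, fun x hx => ?_⟩
  exact strictMonoOn_quintic.injOn (two_lt_of_quintic_eq_zero hx).le
    (two_lt_of_quintic_eq_zero hr).le (hx.trans hr.symm)
end

section
/- Let r be the unique real root of 7x⁵ − 10x⁴ − 20x³ − 4. There exists an infinite set S of rational numbers, all lying in the open interval (2, r), such that for any two distinct t, t' ∈ S the splitting fields inside ℂ of f_t and f_{t'} are distinct. -/
open Polynomial

/-- The splitting field of `f t` inside `ℂ`, i.e. the subfield of `ℂ` generated over `ℚ`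
by the complex roots of `f t`. -/
noncomputable def K (t : ℚ) : IntermediateField ℚ ℂ :=
  IntermediateField.adjoin ℚ ((f t).rootSet ℂ)

/-!
The polynomial `f t` is palindromic, so its roots come in pairs `ξ, ξ⁻¹`, and the sums `ξ + ξ⁻¹`
are the roots of a cubic `fCubic t`; hence `K t` contains a square root of the discriminant of
`fCubic t`. At `t = (5p + 2)/(2p + 1)` this discriminant is `p · A(p)` times a rational square,
with `A(p) ≡ 100 (mod p)`. Along primes `p₀ < p₁ < ⋯` with `p_{k+1} > p_k A(p_k)`, the prime `p_m`
divides `p_m A(p_m)` exactly once and no earlier `p_i A(p_i)`, so no nonempty product of these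
numbers is a square. Their square roots therefore generate multiquadratic fields of unbounded
degree, so each of the finite extensions `K t` contains only finitely many of them, and
infinitely many of the fields `K t` are distinct.
-/

namespace IntermediateField

variable {F E : Type*} [Field F] [Field E] [Algebra F E]

theorem exists_eq_add_mul_of_mem_adjoin_simple_of_sq_eq {b α : E} {c : F}
    (hb : b ^ 2 = algebraMap F E c) (hα : α ∈ F⟮b⟯) :
    ∃ x y : F, α = algebraMap F E x + algebraMap F E y * b := by
  have hq : (X ^ 2 - C c).Monic := monic_X_pow_sub_C c two_ne_zero
  have hqb : aeval b (X ^ 2 - C c) = 0 := by simp [hb]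
  have hint : IsIntegral F b := ⟨_, hq, by rwa [← aeval_def]⟩
  rw [← mem_toSubalgebra, adjoin_simple_toSubalgebra_of_isAlgebraic hint.isAlgebraic,
    Algebra.adjoin_singleton_eq_range_aeval] at hα
  obtain ⟨p, rfl⟩ := hα
  set r := p %ₘ (X ^ 2 - C c) with hr
  have hdeg : r.degree ≤ 1 := by
    have := degree_modByMonic_lt p hq
    rw [degree_X_pow_sub_C two_pos] at this
    exact Order.le_of_lt_succ this
  refine ⟨r.coeff 0, r.coeff 1, ?_⟩
  change aeval b p = _
  rw [← aeval_modByMonic_eq_self_of_root hqb, ← hr]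
  conv_lhs => rw [eq_X_add_C_of_degree_le_one hdeg]
  simp only [map_add, map_mul, aeval_C, aeval_X]
  ring

theorem mem_or_mul_mem_of_sq_mem_adjoin_simple [NeZero (2 : E)] {M : IntermediateField F E}
    {b α : E} (hb : b ^ 2 ∈ M) (hbM : b ∉ M) (hα : α ∈ M⟮b⟯) (hα2 : α ^ 2 ∈ M) :
    α ∈ M ∨ α * b ∈ M := by
  obtain ⟨⟨x, hx⟩, ⟨y, hy⟩, rfl⟩ :=
    exists_eq_add_mul_of_mem_adjoin_simple_of_sq_eq (c := ⟨b ^ 2, hb⟩) rfl hα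
  simp only [algebraMap_apply] at hα2 ⊢
  have hxy : 2 * x * y * b ∈ M := by
    have : 2 * x * y * b = (x + y * b) ^ 2 - x ^ 2 - y ^ 2 * b ^ 2 := by ring
    rw [this]
    exact sub_mem (sub_mem hα2 (pow_mem hx 2)) (mul_mem (pow_mem hy 2) hb)
  have hxy0 : 2 * x * y = 0 := by
    by_contra h
    exact hbM (by simpa [h] using div_mem hxy (mul_mem (mul_mem (ofNat_mem M 2) hx) hy))
  rcases mul_eq_zero.1 hxy0 with h | rfl
  · rw [mul_eq_zero, or_iff_right (NeZero.ne 2)] at h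
    subst h
    exact Or.inr (by simpa [mul_assoc, ← sq] using mul_mem hy hb)
  · exact Or.inl (by simpa using hx)

section SquareRoots

variable [NeZero (2 : E)] {ι : Type*} [DecidableEq ι] {γ : ι → E} {n : ι → F}

theorem not_isSquare_mul_prod_of_notMem
    (hn : ∀ T : Finset ι, T.Nonempty → ¬IsSquare (∏ i ∈ T, n i)) {T : Finset ι} {j : ι}
    (hj : j ∉ T) : ¬IsSquare (n j * ∏ i ∈ T, n i) := by
  rw [← Finset.prod_insert hj]
  exact hn _ (Finset.insert_nonempty j T)

theorem exists_isSquare_mul_prod_of_mem_adjoin (hγ : ∀ i, γ i ^ 2 = algebraMap F E (n i))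
    (hn : ∀ T : Finset ι, T.Nonempty → ¬IsSquare (∏ i ∈ T, n i)) (J : Finset ι) {α : E} {a : F}
    (hα : α ∈ adjoin F (γ '' J)) (ha : α ^ 2 = algebraMap F E a) :
    ∃ T ⊆ J, IsSquare (a * ∏ i ∈ T, n i) := by
  induction J using Finset.induction_on generalizing α a with
  | empty =>
    rw [Finset.coe_empty, Set.image_empty, adjoin_empty, mem_bot] at hα
    obtain ⟨x, rfl⟩ := hα
    rw [← map_pow, (algebraMap F E).injective.eq_iff] at ha
    exact ⟨∅, Finset.empty_subset _, x, by simp [← ha, sq]⟩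
  | insert j J hj ih =>
    set M := adjoin F (γ '' J)
    have hbM : γ j ∉ M := fun h ↦
      let ⟨_, hTJ, hT⟩ := ih h (hγ j)
      not_isSquare_mul_prod_of_notMem hn (fun h ↦ hj (hTJ h)) hT
    have hb : γ j ^ 2 ∈ M := hγ j ▸ algebraMap_mem M (n j)
    rw [Finset.coe_insert, Set.image_insert_eq, Set.insert_eq, Set.union_comm,
      ← adjoin_adjoin_left, mem_restrictScalars] at hα
    rcases mem_or_mul_mem_of_sq_mem_adjoin_simple hb hbM hα (ha ▸ algebraMap_mem M a) with h | h
    · obtain ⟨T, hTJ, hT⟩ := ih h ha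
      exact ⟨T, hTJ.trans (Finset.subset_insert j J), hT⟩
    · obtain ⟨T, hTJ, hT⟩ := ih h (by rw [mul_pow, ha, hγ j, map_mul])
      refine ⟨insert j T, Finset.insert_subset_insert j hTJ, ?_⟩
      rwa [Finset.prod_insert fun h ↦ hj (hTJ h), ← mul_assoc]

theorem sqrt_notMem_adjoin (hγ : ∀ i, γ i ^ 2 = algebraMap F E (n i))
    (hn : ∀ T : Finset ι, T.Nonempty → ¬IsSquare (∏ i ∈ T, n i)) {J : Finset ι} {j : ι}
    (hj : j ∉ J) : γ j ∉ adjoin F (γ '' J) := fun h ↦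
  let ⟨_, hTJ, hT⟩ := exists_isSquare_mul_prod_of_mem_adjoin hγ hn J h (hγ j)
  not_isSquare_mul_prod_of_notMem hn (fun h ↦ hj (hTJ h)) hT

theorem card_lt_finrank_adjoin (hγ : ∀ i, γ i ^ 2 = algebraMap F E (n i))
    (hn : ∀ T : Finset ι, T.Nonempty → ¬IsSquare (∏ i ∈ T, n i)) (J : Finset ι) :
    J.card < Module.finrank F (adjoin F (γ '' J)) := by
  induction J using Finset.induction_on with
  | empty =>
    rw [Finset.card_empty, Finset.coe_empty, Set.image_empty, adjoin_empty,
      IntermediateField.finrank_bot]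
    exact one_pos
  | insert j J hj ih =>
    have hint (i : ι) : IsIntegral F (γ i) :=
      ⟨X ^ 2 - C (n i), monic_X_pow_sub_C _ two_ne_zero, by simp [hγ i]⟩
    have : FiniteDimensional F (adjoin F (γ '' ↑(insert j J))) :=
      finiteDimensional_adjoin (by rintro _ ⟨i, -, rfl⟩; exact hint i)
    have hle : adjoin F (γ '' J) ≤ adjoin F (γ '' ↑(insert j J)) :=
      adjoin.mono _ _ _ (Set.image_mono (by simp))
    have hne : adjoin F (γ '' J) ≠ adjoin F (γ '' ↑(insert j J)) := fun h ↦
      sqrt_notMem_adjoin hγ hn hj (h ▸ subset_adjoin F _ ⟨j, by simp, rfl⟩)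
    have hlt := lt_of_le_of_ne (finrank_le_of_le_right hle)
      fun h ↦ hne (eq_of_le_of_finrank_eq hle h)
    rw [Finset.card_insert_of_notMem hj]
    omega

theorem finite_setOf_sqrt_mem (hγ : ∀ i, γ i ^ 2 = algebraMap F E (n i))
    (hn : ∀ T : Finset ι, T.Nonempty → ¬IsSquare (∏ i ∈ T, n i)) (L : IntermediateField F E)
    [FiniteDimensional F L] : {i | γ i ∈ L}.Finite := by
  by_contra h
  obtain ⟨J, hJ, hcard⟩ := Set.Infinite.exists_subset_card_eq h (Module.finrank F L)
  have hle : adjoin F (γ '' J) ≤ L := adjoin_le_iff.2 (by rintro _ ⟨i, hi, rfl⟩; exact hJ hi)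
  have := card_lt_finrank_adjoin hγ hn J
  have := finrank_le_of_le_right hle
  omega

end SquareRoots

end IntermediateField

theorem Set.Infinite.exists_subset_injOn_infinite {α β : Type*} {s : Set α} {f : α → β}
    (hs : s.Infinite) (hf : ∀ a ∈ s, {x ∈ s | f x = f a}.Finite) :
    ∃ t ⊆ s, t.Infinite ∧ t.InjOn f := by
  obtain ⟨t, hts, hinj, himg⟩ := (Set.surjOn_image f s).exists_subset_injOn_image_eq
  refine ⟨t, hts, fun ht ↦ hs ?_, hinj⟩
  have himg : (f '' s).Finite := himg ▸ ht.image f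
  refine (himg.biUnion (t := fun b ↦ {x ∈ s | f x = b}) fun b hb ↦ ?_).subset fun x hx ↦
    Set.mem_biUnion (Set.mem_image_of_mem f hx) ⟨hx, rfl⟩
  obtain ⟨a, ha, rfl⟩ := hb
  exact hf a ha

theorem not_isSquare_of_padicValNat_eq_one {p N : ℕ} [Fact p.Prime] (h : padicValNat p N = 1) :
    ¬IsSquare N := by
  rintro ⟨k, rfl⟩
  have hk : k ≠ 0 := by rintro rfl; simp at h
  rw [padicValNat.mul hk hk] at h
  omega

-- `f t` is palindromic: `f t ξ = ξ³ · fCubic t (ξ + ξ⁻¹)`.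
noncomputable def fCubic (t : ℚ) : Cubic ℚ := ⟨1, u t, v t - 3, w t - 2 * u t⟩

theorem f_ne_zero (t : ℚ) : f t ≠ 0 := fun h ↦ by
  simpa [f, coeff_X_pow, coeff_X, coeff_C, coeff_one] using congr_arg (coeff · 6) h

theorem mem_K_of_root_fCubic {t : ℚ} {z : ℂ}
    (hz : z ^ 3 + u t * z ^ 2 + (v t - 3) * z + (w t - 2 * u t) = 0) : z ∈ K t := by
  obtain ⟨ξ, hξ⟩ : ∃ ξ : ℂ, 1 * (ξ * ξ) + -z * ξ + 1 = 0 :=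
    exists_quadratic_eq_zero one_ne_zero (IsAlgClosed.exists_eq_mul_self _)
  have hξ0 : ξ ≠ 0 := by rintro rfl; simp at hξ
  have hfξ : ξ ∈ (f t).rootSet ℂ := by
    rw [mem_rootSet]
    refine ⟨f_ne_zero t, ?_⟩
    simp only [f, map_add, map_mul, map_pow, aeval_X, aeval_C, map_one, eq_ratCast]
    linear_combination (ξ ^ 4 + (u t + z) * ξ ^ 3 + (v t - 1 + u t * z + z ^ 2) * ξ ^ 2
      + (u t + z) * ξ + 1) * hξ + ξ ^ 3 * hz
  have hξK : ξ ∈ K t := IntermediateField.subset_adjoin ℚ _ hfξ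
  have hz : z = ξ + ξ⁻¹ := by
    field_simp
    linear_combination -hξ
  exact hz ▸ add_mem hξK (inv_mem hξK)

theorem exists_mem_K_sq_eq_discr (t : ℚ) : ∃ δ ∈ K t, δ ^ 2 = ((fCubic t).discr : ℂ) := by
  have ha : (fCubic t).a ≠ 0 := one_ne_zero
  obtain ⟨x, y, z, h3⟩ := (Cubic.splits_iff_roots_eq_three ha).1
    (IsAlgClosed.splits ((fCubic t).toPoly.map (algebraMap ℚ ℂ)))
  have hroot {r : ℂ} (hr : r ∈ (Cubic.map (algebraMap ℚ ℂ) (fCubic t)).roots) : r ∈ K t := by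
    rw [Cubic.mem_roots_iff (Cubic.ne_zero_of_a_ne_zero (by simp [Cubic.map, fCubic]))] at hr
    apply mem_K_of_root_fCubic
    simpa [Cubic.map, fCubic] using hr
  refine ⟨(x - y) * (x - z) * (y - z), ?_, ?_⟩
  · have hx := hroot (r := x) (by simp [h3])
    have hy := hroot (r := y) (by simp [h3])
    have hz := hroot (r := z) (by simp [h3])
    exact mul_mem (mul_mem (sub_mem hx hy) (sub_mem hx hz)) (sub_mem hy hz)
  · rw [← eq_ratCast (algebraMap ℚ ℂ), Cubic.discr_eq_prod_three_roots ha h3]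
    simp [fCubic]

theorem discr_fCubic_mul_sq {t : ℚ} (h2 : t ≠ 2) (h1 : t ^ 2 + t - 1 ≠ 0) :
    (fCubic t).discr * ((t - 2) ^ 2 * (t ^ 2 + t - 1) ^ 3) ^ 2 =
      (t - 2) * (4 + 20 * t ^ 3 + 10 * t ^ 4 - 7 * t ^ 5) *
        (5 * (t ^ 5 - 4 * t ^ 4 + 2 * t ^ 3 + 4 * t ^ 2 - 2 * t - 1)) ^ 2 := by
  simp only [fCubic, Cubic.discr, u, v, w]
  generalize hA : t ^ 2 + t - 1 = A at *
  generalize hB : t - 2 = B at *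
  have hB0 : B ≠ 0 := hB ▸ sub_ne_zero.2 h2
  field_simp
  subst hA hB
  ring

def param (p : ℕ) : ℚ := (5 * p + 2) / (2 * p + 1)

-- `(2p + 1)⁶ (t - 2)(4 + 20t³ + 10t⁴ - 7t⁵)` at `t = param p`: the discriminant of
-- `fCubic (param p)` up to a rational square.
def discrPart (p : ℕ) : ℕ :=
  p * (753 * p ^ 5 + 4820 * p ^ 4 + 6620 * p ^ 3 + 3800 * p ^ 2 + 1000 * p + 100)

theorem two_lt_param {p : ℕ} (hp : 0 < p) : 2 < param p := by
  rw [param, lt_div_iff₀ (by positivity)]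
  have : (0 : ℚ) < p := by exact_mod_cast hp
  linarith

theorem param_lt_five_halves (p : ℕ) : param p < 5 / 2 := by
  rw [param, div_lt_div_iff₀ (by positivity) (by norm_num)]
  linarith

theorem param_strictMono : StrictMono param := fun a b hab ↦ by
  have : (a : ℚ) < b := by exact_mod_cast hab
  rw [param, param, div_lt_div_iff₀ (by positivity) (by positivity)]
  linarith

theorem exists_mem_K_param_sq_eq_discrPart {p : ℕ} (hp : 0 < p) :
    ∃ γ ∈ K (param p), γ ^ 2 = (discrPart p : ℂ) := by
  set t := param p with ht
  have h2 : 2 < t := two_lt_param hp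
  have hs : t ^ 5 - 4 * t ^ 4 + 2 * t ^ 3 + 4 * t ^ 2 - 2 * t - 1 ≠ 0 := by
    have : (t ^ 5 - 4 * t ^ 4 + 2 * t ^ 3 + 4 * t ^ 2 - 2 * t - 1) * (2 * p + 1) ^ 5 =
        -(267 * p ^ 5 + 674 * p ^ 4 + 630 * p ^ 3 + 280 * p ^ 2 + 60 * p + 5) := by
      rw [ht, param]; field_simp; ring
    intro h
    rw [h, zero_mul] at this
    linarith [show (0 : ℚ) < 267 * p ^ 5 + 674 * p ^ 4 + 630 * p ^ 3 + 280 * p ^ 2 + 60 * p + 5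
      by positivity]
  have hpart : (t - 2) * (4 + 20 * t ^ 3 + 10 * t ^ 4 - 7 * t ^ 5) * (2 * p + 1) ^ 6 =
      discrPart p := by
    rw [ht, param, discrPart]; push_cast; field_simp; ring
  obtain ⟨δ, hδK, hδ⟩ := exists_mem_K_sq_eq_discr t
  have hdiscr := discr_fCubic_mul_sq h2.ne' (by nlinarith)
  set s := t ^ 5 - 4 * t ^ 4 + 2 * t ^ 3 + 4 * t ^ 2 - 2 * t - 1
  set ρ : ℚ := (t - 2) ^ 2 * (t ^ 2 + t - 1) ^ 3 * (2 * p + 1) ^ 3 / (5 * s) with hρ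
  have hρ : (fCubic t).discr * ρ ^ 2 = discrPart p := calc
    _ = (fCubic t).discr * ((t - 2) ^ 2 * (t ^ 2 + t - 1) ^ 3) ^ 2 * (2 * p + 1) ^ 6 /
          (5 * s) ^ 2 := by rw [hρ, div_pow]; ring
    _ = (t - 2) * (4 + 20 * t ^ 3 + 10 * t ^ 4 - 7 * t ^ 5) * (2 * p + 1) ^ 6 *
          ((5 * s) ^ 2 / (5 * s) ^ 2) := by
      rw [hdiscr]; ring
    _ = discrPart p := by
      rw [div_self (pow_ne_zero 2 (mul_ne_zero (by norm_num) hs)), mul_one, hpart]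
  refine ⟨δ * ρ, mul_mem hδK (algebraMap_mem _ ρ), ?_⟩
  rw [mul_pow, hδ]
  exact_mod_cast hρ

theorem padicValNat_discrPart_self {p : ℕ} (hp : p.Prime) (h100 : 100 < p) :
    padicValNat p (discrPart p) = 1 := by
  have : Fact p.Prime := ⟨hp⟩
  set A := 753 * p ^ 5 + 4820 * p ^ 4 + 6620 * p ^ 3 + 3800 * p ^ 2 + 1000 * p + 100
  have hA : ¬p ∣ A := fun h ↦ by
    have hA : A = p * (753 * p ^ 4 + 4820 * p ^ 3 + 6620 * p ^ 2 + 3800 * p + 1000) + 100 := by ring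
    have := Nat.le_of_dvd (by norm_num) ((Nat.dvd_add_right (dvd_mul_right _ _)).1 (hA ▸ h))
    omega
  rw [discrPart, padicValNat.mul hp.ne_zero (by positivity), padicValNat_self,
    padicValNat.eq_zero_of_not_dvd hA]

noncomputable def sparsePrime : ℕ → ℕ
  | 0 => (Nat.exists_infinite_primes 101).choose
  | k + 1 => (Nat.exists_infinite_primes (discrPart (sparsePrime k) + 1)).choose

theorem sparsePrime_prime (k : ℕ) : (sparsePrime k).Prime := by
  cases k <;> exact (Nat.exists_infinite_primes _).choose_spec.2

theorem discrPart_lt_sparsePrime_succ (k : ℕ) : discrPart (sparsePrime k) < sparsePrime (k + 1) :=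
  (Nat.exists_infinite_primes _).choose_spec.1

theorem discrPart_pos {p : ℕ} (hp : 0 < p) : 0 < discrPart p := by
  unfold discrPart
  positivity

theorem le_discrPart (p : ℕ) : p ≤ discrPart p := Nat.le_mul_of_pos_right p (by positivity)

theorem sparsePrime_strictMono : StrictMono sparsePrime :=
  strictMono_nat_of_lt_succ fun k ↦ (le_discrPart _).trans_lt (discrPart_lt_sparsePrime_succ k)

theorem hundred_lt_sparsePrime (k : ℕ) : 100 < sparsePrime k :=
  (Nat.exists_infinite_primes 101).choose_spec.1.trans (sparsePrime_strictMono.monotone k.zero_le)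

theorem discrPart_lt_sparsePrime {i m : ℕ} (h : i < m) :
    discrPart (sparsePrime i) < sparsePrime m :=
  (discrPart_lt_sparsePrime_succ i).trans_le (sparsePrime_strictMono.monotone h)

theorem not_isSquare_prod_discrPart (T : Finset ℕ) (hT : T.Nonempty) :
    ¬IsSquare (∏ i ∈ T, (discrPart (sparsePrime i) : ℚ)) := by
  set m := T.max' hT
  have hp := sparsePrime_prime m
  have : Fact (sparsePrime m).Prime := ⟨hp⟩
  have hrest : ¬sparsePrime m ∣ ∏ i ∈ T.erase m, discrPart (sparsePrime i) := by
    rw [(Nat.prime_iff.1 hp).dvd_finsetProd_iff]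
    rintro ⟨i, hi, hdvd⟩
    have him : i < m := lt_of_le_of_ne (T.le_max' i (Finset.mem_of_mem_erase hi))
      (Finset.ne_of_mem_erase hi)
    exact (discrPart_lt_sparsePrime him).not_ge
      (Nat.le_of_dvd (discrPart_pos (sparsePrime_prime i).pos) hdvd)
  rw [← Nat.cast_prod, Rat.isSquare_natCast_iff, ← Finset.mul_prod_erase T _ (T.max'_mem hT)]
  apply not_isSquare_of_padicValNat_eq_one (p := sparsePrime m)
  have hpos (i : ℕ) : discrPart (sparsePrime i) ≠ 0 := (discrPart_pos (sparsePrime_prime i).pos).ne'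
  rw [padicValNat.mul (hpos m) (Finset.prod_ne_zero_iff.2 fun i _ ↦ hpos i),
    padicValNat_discrPart_self hp (hundred_lt_sparsePrime m), padicValNat.eq_zero_of_not_dvd hrest]

theorem finiteDimensional_K (t : ℚ) : FiniteDimensional ℚ (K t) :=
  have : Finite ((f t).rootSet ℂ) := ((f t).rootSet_finite ℂ).to_subtype
  IntermediateField.finiteDimensional_adjoin fun _ hx ↦
    IsAlgebraic.isIntegral ⟨f t, f_ne_zero t, (mem_rootSet.1 hx).2⟩

theorem five_halves_le_of_unique_root {r : ℝ}
    (hr : ∀ x : ℝ, 7 * x ^ 5 - 10 * x ^ 4 - 20 * x ^ 3 - 4 = 0 → x = r) : 5 / 2 ≤ r := by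
  obtain ⟨x, hx, hx0⟩ := intermediate_value_Icc (by norm_num : (5 / 2 : ℝ) ≤ 3)
    (f := fun x : ℝ ↦ 7 * x ^ 5 - 10 * x ^ 4 - 20 * x ^ 3 - 4) (by fun_prop)
    (show (0 : ℝ) ∈ Set.Icc _ _ by norm_num)
  exact hr x hx0 ▸ hx.1

theorem infinitely_many_distinct_splitting_fields_general
    (r : ℝ)
    (hr' : ∀ x : ℝ, 7*x^5 - 10*x^4 - 20*x^3 - 4 = 0 → x = r) :
    ∃ S : Set ℚ, S.Infinite ∧ (∀ t ∈ S, 2 < (t : ℝ) ∧ (t : ℝ) < r) ∧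
      ∀ t ∈ S, ∀ t' ∈ S, t ≠ t' → K t ≠ K t' := by
  have hp (k : ℕ) : 0 < sparsePrime k := (sparsePrime_prime k).pos
  choose γ hγK hγ using fun k ↦ exists_mem_K_param_sq_eq_discrPart (hp k)
  set g := fun k ↦ param (sparsePrime k)
  have hfib (k : ℕ) : {i | K (g i) = K (g k)}.Finite := by
    have := finiteDimensional_K (g k)
    refine (IntermediateField.finite_setOf_sqrt_mem (fun i ↦ (hγ i).trans (map_natCast _ _).symm)
      not_isSquare_prod_discrPart (K (g k))).subset fun i hi ↦ ?_
    exact (hi : K (g i) = K (g k)) ▸ hγK i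
  obtain ⟨S, hS, hSinf, hinj⟩ := Set.Infinite.exists_subset_injOn_infinite (f := K)
    (Set.infinite_range_of_injective (param_strictMono.comp sparsePrime_strictMono).injective)
    (by rintro _ ⟨k, rfl⟩
        exact ((hfib k).image g).subset (by rintro _ ⟨⟨i, rfl⟩, h⟩; exact ⟨i, h, rfl⟩))
  refine ⟨S, hSinf, fun t ht ↦ ?_, fun t ht t' ht' hne h ↦ hne (hinj ht ht' h)⟩
  obtain ⟨k, rfl⟩ := hS ht
  have hlt := (Rat.cast_lt (K := ℝ)).2 (param_lt_five_halves (sparsePrime k))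
  push_cast at hlt
  exact ⟨by exact_mod_cast two_lt_param (hp k), hlt.trans_le (five_halves_le_of_unique_root hr')⟩

/-- Let `r` be the unique real root of `7x⁵ − 10x⁴ − 20x³ − 4`. There is an infinite set
`S` of rational numbers, all lying in the open interval `(2, r)`, such that for any two
distinct `t, t' ∈ S` the splitting fields inside `ℂ` of `f t` and `f t'` are distinct. -/
theorem infinitely_many_distinct_splitting_fields
    (r : ℝ) (hr : 7*r^5 - 10*r^4 - 20*r^3 - 4 = 0)
    (hr' : ∀ x : ℝ, 7*x^5 - 10*x^4 - 20*x^3 - 4 = 0 → x = r) :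
    ∃ S : Set ℚ, S.Infinite ∧ (∀ t ∈ S, 2 < (t : ℝ) ∧ (t : ℝ) < r) ∧
      ∀ t ∈ S, ∀ t' ∈ S, t ≠ t' → K t ≠ K t' :=
  infinitely_many_distinct_splitting_fields_general r hr'
end

section
/- For all rational numbers a and b, the polynomial X⁵ + (aX + b)⁵ + 1 has at most three real roots; that is, the set {x ∈ ℝ : x⁵ + (ax + b)⁵ + 1 = 0} has at most three elements. -/
/-!
Rolle's theorem, applied twice, bounds the number of real zeros of
`f x = x⁵ + (a x + b)⁵ + 1` by two more than the number of zeros of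
`f'' x = 20 (x³ + a² (a x + b)³)`. Writing `t³ = a²`, the cubic vanishes exactly when
`x = -t (a x + b)`, a linear equation; it can have two solutions only if `t a = -1`,
which forces `a = -1`, `b = 0`, and then `f ≡ 1`.
-/

open Set

theorem encard_zeros_le_encard_deriv_zeros_add_one {f : ℝ → ℝ} (hf : Continuous f) :
    (f ⁻¹' {0}).encard ≤ (deriv f ⁻¹' {0}).encard + 1 := by
  obtain ht | ht := (deriv f ⁻¹' {0}).finite_or_infinite
  swap
  · simp [ht.encard_eq]
  obtain ⟨t, ht⟩ := ht.exists_finset_coe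
  rw [← ht, encard_coe_eq_coe_finsetCard]
  by_contra! h
  obtain ⟨u, hu, hcard⟩ := exists_subset_encard_eq (Order.add_one_le_of_lt h)
  obtain ⟨s, rfl⟩ := (finite_of_encard_eq_coe hcard).exists_finset_coe
  have hst : s.card ≤ t.card + 1 := Finset.card_le_of_interleaved fun x hx y hy hxy _ => by
    obtain ⟨c, hc, hc0⟩ :=
      exists_deriv_eq_zero hxy hf.continuousOn ((hu hx).trans (hu hy).symm)
    exact ⟨c, by rw [← Finset.mem_coe, ht]; exact hc0, hc⟩
  rw [encard_coe_eq_coe_finsetCard] at hcard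
  norm_cast at hcard
  omega

theorem encard_zeros_le_encard_deriv_deriv_zeros_add_two {f : ℝ → ℝ} (hf : ContDiff ℝ 2 f) :
    (f ⁻¹' {0}).encard ≤ (deriv (deriv f) ⁻¹' {0}).encard + 2 :=
  calc (f ⁻¹' {0}).encard
      ≤ (deriv f ⁻¹' {0}).encard + 1 := encard_zeros_le_encard_deriv_zeros_add_one hf.continuous
    _ ≤ (deriv (deriv f) ⁻¹' {0}).encard + 1 + 1 := by
      gcongr
      exact encard_zeros_le_encard_deriv_zeros_add_one (hf.continuous_deriv one_le_two)
    _ = (deriv (deriv f) ⁻¹' {0}).encard + 2 := by rw [add_assoc, one_add_one_eq_two]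

theorem deriv_deriv_pow_five_add_pow_five_add_one (a b : ℝ) :
    deriv (deriv fun x : ℝ => x ^ 5 + (a * x + b) ^ 5 + 1) =
      fun x => 20 * (x ^ 3 + a ^ 2 * (a * x + b) ^ 3) := by
  have h : deriv (fun x : ℝ => x ^ 5 + (a * x + b) ^ 5 + 1) =
      fun x => 5 * x ^ 4 + 5 * a * (a * x + b) ^ 4 := by
    ext x
    simp (disch := fun_prop) [deriv_fun_add, deriv_fun_pow]
    ring
  ext x
  simp (disch := fun_prop) [h, deriv_fun_add, deriv_fun_pow, deriv_fun_mul]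
  ring

theorem subsingleton_zeros_cube_add_sq_mul_cube {a b : ℝ} (h : a ≠ -1 ∨ b ≠ 0) :
    {x : ℝ | x ^ 3 + a ^ 2 * (a * x + b) ^ 3 = 0}.Subsingleton := by
  set t : ℝ := (a ^ 2) ^ ((3 : ℕ)⁻¹ : ℝ)
  have ht : t ^ 3 = a ^ 2 := Real.rpow_inv_natCast_pow (sq_nonneg a) three_ne_zero
  have hlin : ∀ x, x ^ 3 + a ^ 2 * (a * x + b) ^ 3 = 0 → (1 + t * a) * x = -(t * b) := by
    intro x hx
    have hcube : x ^ 3 = (-(t * (a * x + b))) ^ 3 := by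
      linear_combination hx + (a * x + b) ^ 3 * ht
    linear_combination (Odd.pow_inj (by decide)).1 hcube
  intro x hx y hy
  have hne : 1 + t * a ≠ 0 := by
    intro h0
    have ha : a = -1 := (Odd.pow_inj (by decide : Odd 5)).1 <| by
      linear_combination -a ^ 3 * ht + ((t * a) ^ 2 - t * a + 1) * h0
    have ht1 : t = 1 := by linear_combination -h0 + t * ha
    have hb : b = 0 := by linear_combination hlin x hx - x * h0 - b * ht1
    exact h.elim (· ha) (· hb)
  exact mul_left_cancel₀ hne ((hlin x hx).trans (hlin y hy).symm)

/-- For all rational `a` and `b`, the polynomial `X⁵ + (aX + b)⁵ + 1` has at most three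
real roots: the set of its real roots is contained in a finite set of cardinality `≤ 3`. -/
theorem at_most_three_real_roots (a b : ℚ) :
    ∃ s : Finset ℝ, s.card ≤ 3 ∧
      ∀ x : ℝ, x^5 + ((a : ℝ) * x + (b : ℝ))^5 + 1 = 0 → x ∈ s := by
  set f : ℝ → ℝ := fun x => x ^ 5 + ((a : ℝ) * x + (b : ℝ)) ^ 5 + 1 with hf
  suffices h : (f ⁻¹' {0}).encard ≤ 3 by
    obtain ⟨hfin, hcard⟩ := encard_le_coe_iff_finite_ncard_le.1 h
    exact ⟨hfin.toFinset, by rwa [← ncard_eq_toFinset_card _ hfin],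
      fun x hx => hfin.mem_toFinset.2 hx⟩
  by_cases hdeg : (a : ℝ) = -1 ∧ (b : ℝ) = 0
  · have hf1 : ∀ x, f x = 1 := fun x => by simp only [hf, hdeg.1, hdeg.2]; ring
    simp [preimage, hf1]
  calc (f ⁻¹' {0}).encard ≤ (deriv (deriv f) ⁻¹' {0}).encard + 2 :=
        encard_zeros_le_encard_deriv_deriv_zeros_add_two (by fun_prop)
    _ ≤ 1 + 2 := by
      gcongr
      rw [encard_le_one_iff_subsingleton, hf, deriv_deriv_pow_five_add_pow_five_add_one]
      exact (subsingleton_zeros_cube_add_sq_mul_cube (not_and_or.1 hdeg)).anti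
        fun x hx => by simpa using hx
    _ = 3 := by norm_num
end

section
/- Let t be a rational number with t ≠ 2, and let g_t = X³ + uX² + (v−3)X + (w − 2u) ∈ ℚ[X]. Then the discriminant of the cubic g_t equals −25·(t⁴ − 3t³ − t² + 3t + 1)²·(7t⁵ − 10t⁴ − 20t³ − 4)·(t−1)² / ((t−2)³(t²+t−1)⁶). -/
open Polynomial

/-- The discriminant `18pqr − 4p³r + p²q² − 4q³ − 27r²` of a monic cubic
`X³ + pX² + qX + r`. -/
noncomputable def cubicDisc (p q r : ℚ) : ℚ :=
  18*p*q*r - 4*p^3*r + p^2*q^2 - 4*q^3 - 27*r^2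

theorem sq_add_self_sub_one_ne_zero (t : ℚ) : t^2 + t - 1 ≠ 0 := by
  intro h
  have h5 : IsSquare (5 : ℚ) := ⟨2 * t + 1, by linear_combination -4 * h⟩
  rw [Rat.isSquare_iff] at h5
  norm_num at h5

/-- For rational `t ≠ 2`, the discriminant of the cubic
`g_t = X³ + uX² + (v−3)X + (w−2u)` equals
`−25(t⁴−3t³−t²+3t+1)²(7t⁵−10t⁴−20t³−4)(t−1)² / ((t−2)³(t²+t−1)⁶)`. -/
theorem disc_g (t : ℚ) (h2 : t ≠ 2) :
    cubicDisc (u t) (v t - 3) (w t - 2 * u t) =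
      -(25 * (t^4 - 3*t^3 - t^2 + 3*t + 1)^2 * (7*t^5 - 10*t^4 - 20*t^3 - 4) * (t - 1)^2) /
        ((t - 2)^3 * (t^2 + t - 1)^6) := by
  -- `field_simp` normalises the denominator `t^2 + t - 1` to this shape
  have hq : t * (t + 1) - 1 ≠ 0 := by
    convert sq_add_self_sub_one_ne_zero t using 1; ring
  have hd : t - 2 ≠ 0 := sub_ne_zero.mpr h2
  unfold cubicDisc u v w
  field_simp
  ring
end

section
/- Let t be a rational number with t ≠ 2, and let x, y ∈ ℂ satisfy x⁵ + y⁵ = 0 and x² + y² + t·xy = 0. Then x = 0 and y = 0. In other words, the intersection of the Fermat quintic x⁵+y⁵+z⁵=0 with the conic C_t : x²+y²+z²+t(xy+xz+yz)=0 contains no point on the line z = 0. -/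
/-!
If `y ≠ 0`, then `r = x / y` satisfies `r ^ 5 = -1` and `r ^ 2 + t r + 1 = 0`. Reducing
`r ^ 5 + 1` modulo the quadratic leaves the linear relation
`(t ^ 4 - 3 t ^ 2 + 1) r = 2 t - t ^ 3 - 1`, whose leading coefficient cannot vanish for
rational `t` because `5` is not a square in `ℚ`. Hence `r` is rational, so `r = -1`, and then
the quadratic forces `t = 2`.
-/

theorem Rat.not_isSquare_five : ¬ IsSquare (5 : ℚ) := by
  rw [Rat.isSquare_iff]; norm_num

theorem Rat.pow_four_sub_three_mul_sq_add_one_ne_zero (t : ℚ) : t ^ 4 - 3 * t ^ 2 + 1 ≠ 0 :=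
  fun h => Rat.not_isSquare_five ⟨2 * t ^ 2 - 3, by linear_combination (-4 : ℚ) * h⟩

-- The remainder of `r ^ 5 + 1` on division by `r ^ 2 + t r + 1`.
theorem mul_eq_of_quadratic_of_pow_five {R : Type*} [CommRing R] {t r : R}
    (hq : r ^ 2 + t * r + 1 = 0) (h5 : r ^ 5 = -1) :
    (t ^ 4 - 3 * t ^ 2 + 1) * r = 2 * t - t ^ 3 - 1 := by
  linear_combination h5 - (r ^ 3 - t * r ^ 2 + (t ^ 2 - 1) * r + (2 * t - t ^ 3)) * hq

theorem eq_two_of_quadratic_of_pow_five {K : Type*} [Field K] [CharZero K] {t : ℚ} {r : K}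
    (hq : r ^ 2 + t * r + 1 = 0) (h5 : r ^ 5 = -1) : t = 2 := by
  have hd : ((t ^ 4 - 3 * t ^ 2 + 1 : ℚ) : K) ≠ 0 :=
    Rat.cast_ne_zero.mpr (Rat.pow_four_sub_three_mul_sq_add_one_ne_zero t)
  obtain ⟨s, rfl⟩ : ∃ s : ℚ, r = s := by
    refine ⟨(2 * t - t ^ 3 - 1) / (t ^ 4 - 3 * t ^ 2 + 1), ?_⟩
    rw [Rat.cast_div, eq_div_iff hd, mul_comm]
    push_cast
    exact mul_eq_of_quadratic_of_pow_five hq h5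
  obtain rfl : s = -1 := (pow_eq_neg_one_iff.mp (by exact_mod_cast h5 : s ^ 5 = -1)).1
  have h : ((2 - t : ℚ) : K) = 0 := by push_cast at hq ⊢; linear_combination hq
  exact (sub_eq_zero.mp (Rat.cast_eq_zero.mp h)).symm

/-- For rational `t ≠ 2`, if `x, y ∈ ℂ` satisfy `x⁵ + y⁵ = 0` and `x² + y² + t·xy = 0`,
then `x = 0` and `y = 0`: the intersection of the Fermat quintic `x⁵+y⁵+z⁵=0` with the
conic `C_t : x²+y²+z²+t(xy+xz+yz)=0` contains no point on the line `z = 0`. -/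
theorem no_intersection_point_at_infinity (t : ℚ) (h2 : t ≠ 2) (x y : ℂ)
    (h5 : x^5 + y^5 = 0) (hc : x^2 + y^2 + (t : ℂ) * (x * y) = 0) :
    x = 0 ∧ y = 0 := by
  by_cases hy : y = 0
  · subst hy
    exact ⟨pow_eq_zero_iff (n := 5) (by norm_num) |>.mp (by simpa using h5), rfl⟩
  refine absurd (eq_two_of_quadratic_of_pow_five (r := x / y) ?_ ?_) h2
  · field_simp
    linear_combination hc
  · rw [div_pow, div_eq_iff (pow_ne_zero 5 hy)]
    linear_combination h5
end
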